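/- Consider an arbitrary call of Resample(E_i) in the randomized sampling algorithm. If an event E_j does not occur under the assignment at the beginning of this call and the call terminates, then E_j does not occur under the assignment at the end of the call. -/
import Mathlib


universe u v

mutual
/-- `ResampleExec e E N ω i α k k' β` : a terminating execution of `Resample(E i)`,
started at assignment `α` with fresh-sample counter `k`, which first resamples the
variables in the scope `e i` (using the fresh sample `ω k`) and then runs the inner
while-loop, finishing with counter `k'` and assignment `β`. -/
inductive ResampleExec {ι : Type u} [DecidableEq ι] {D : ι → Type v} {m : ℕ}
    (e : Fin m → Finset ι) (E : Fin m → Set (∀ i, D i))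
    (N : Fin m → Finset (Fin m)) (ω : ℕ → ∀ i, D i) :
    Fin m → (∀ i, D i) → ℕ → ℕ → (∀ i, D i) → Prop
  | call {i : Fin m} {α β : ∀ i, D i} {k k' : ℕ} :
      ResampleLoop e E N ω i (fun x => if x ∈ e i then ω k x else α x) (k + 1) k' β →
      ResampleExec e E N ω i α k k' β

/-- The inner while-loop of `Resample(E i)` : while some event `E j`, `j ∈ N i`,
occurs under the current assignment, recursively call `Resample` on the
least-indexed such event. -/
inductive ResampleLoop {ι : Type u} [DecidableEq ι] {D : ι → Type v} {m : ℕ}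
    (e : Fin m → Finset ι) (E : Fin m → Set (∀ i, D i))
    (N : Fin m → Finset (Fin m)) (ω : ℕ → ∀ i, D i) :
    Fin m → (∀ i, D i) → ℕ → ℕ → (∀ i, D i) → Prop
  | done {i : Fin m} {α : ∀ i, D i} {k : ℕ} :
      (∀ j ∈ N i, α ∉ E j) → ResampleLoop e E N ω i α k k α
  | step {i j : Fin m} {α β γ : ∀ i, D i} {k k' k'' : ℕ} :
      j ∈ N i → α ∈ E j → (∀ j' ∈ N i, α ∈ E j' → j ≤ j') →
      ResampleExec e E N ω j α k k' β →
      ResampleLoop e E N ω i β k' k'' γ →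
      ResampleLoop e E N ω i α k k'' γ
end

theorem resample_loop_ends {ι : Type u} [DecidableEq ι] {D : ι → Type v} {m : ℕ}
    {e : Fin m → Finset ι} {E : Fin m → Set (∀ i, D i)}
    {N : Fin m → Finset (Fin m)} {ω : ℕ → ∀ i, D i}
    {i : Fin m} {α γ : ∀ i, D i} {k k' : ℕ}
    (h : ResampleLoop e E N ω i α k k' γ) : ∀ j ∈ N i, γ ∉ E j :=
  ResampleLoop.rec (motive_1 := fun _ _ _ _ _ _ => True)
    (motive_2 := fun i _ _ _ γ _ => ∀ j ∈ N i, γ ∉ E j)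
    (fun _ _ => trivial)
    (fun h => h)
    (fun _ _ _ _ _ _ ih => ih) h

theorem resample_exec_pres {ι : Type u} [DecidableEq ι] {D : ι → Type v} {m : ℕ}
    {e : Fin m → Finset ι} {E : Fin m → Set (∀ i, D i)}
    {N : Fin m → Finset (Fin m)} {ω : ℕ → ∀ i, D i}
    (hdep : ∀ j, ∀ a b : ∀ i, D i, (∀ x ∈ e j, a x = b x) → (a ∈ E j ↔ b ∈ E j))
    (hN : ∀ i j, ¬ Disjoint (e i) (e j) → j ∈ N i)
    {i : Fin m} {α β : ∀ i, D i} {k k' : ℕ}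
    (hexec : ResampleExec e E N ω i α k k' β)
    {j : Fin m} (hj : α ∉ E j) : β ∉ E j := by
  refine ResampleExec.rec (motive_1 := fun _ α _ _ β _ => ∀ j, α ∉ E j → β ∉ E j)
    (motive_2 := fun _ α _ _ γ _ => ∀ j, α ∉ E j → γ ∉ E j)
    ?_ ?_ ?_ hexec j hj
  · intro i α β k k' hloop ih j hj
    by_cases hjN : j ∈ N i
    · exact resample_loop_ends hloop j hjN
    · have hdisj : Disjoint (e i) (e j) := by
        by_contra h
        exact hjN (hN i j h)
      refine ih j (fun h => hj ?_)
      exact (hdep j _ α (fun x hx => by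
        simp only [if_neg (Finset.disjoint_right.mp hdisj hx)])).mp h
  · intro i α k _ j hj
    exact hj
  · intro i j' α β γ k k' k'' _ _ _ _ _ ih1 ih2 j hj
    exact ih2 j (ih1 j hj)

/-- **Progress lemma.** In the variable setting (each `E j` depends only on the
variables in its scope `e j`, and `N i` contains every event whose scope meets
`e i`), if an event `E j` does not occur at the beginning of a terminating call
of `Resample(E i)`, then it does not occur at the end of the call either. -/
theorem resample_progress {ι : Type u} [DecidableEq ι] {D : ι → Type v} {m : ℕ}
    (e : Fin m → Finset ι) (E : Fin m → Set (∀ i, D i))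
    (N : Fin m → Finset (Fin m)) (ω : ℕ → ∀ i, D i)
    (hdep : ∀ j, ∀ a b : ∀ i, D i, (∀ x ∈ e j, a x = b x) → (a ∈ E j ↔ b ∈ E j))
    (hN : ∀ i j, ¬ Disjoint (e i) (e j) → j ∈ N i)
    {i : Fin m} {α β : ∀ i, D i} {k k' : ℕ}
    (hexec : ResampleExec e E N ω i α k k' β)
    {j : Fin m} (hj : α ∉ E j) : β ∉ E j :=
  resample_exec_pres hdep hN hexec hj
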